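/- arXiv:2005.12380 — 7 statements merged into one kernel-verified Lean document; each statement's English description precedes it below -/
import Mathlib

section
/- Let D be an integral domain with fraction field K, and let A be an m×n matrix over D whose rank (as a matrix over K) is r. Then there exist an m×m permutation matrix P_r, an n×n permutation matrix P_c, a matrix L ∈ D^{m×r} with L_{ij} = 0 for j > i and L_{ii} ≠ 0 for 1 ≤ i ≤ r, and a matrix U ∈ D^{r×n} with U_{ij} = 0 for i > j and U_{ii} = L_{ii} for 1 ≤ i ≤ r, such that, writing p_i = L_{ii} and D_g = diag(p_1, p_1p_2, p_2p_3, …, p_{r−1}p_r) ∈ D^{r×r}, the identity A = P_r · L · D_g^{−1} · U · P_c holds as an identity of matrices over K. -/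
open Matrix Finset


theorem sum_truncate {M : Type*} [AddCommMonoid M] {r t : ℕ} (ht : t ≤ r) (F : Fin r → M)
    (hv : ∀ k : Fin r, t ≤ (k : ℕ) → F k = 0) :
    ∑ k : Fin r, F k = ∑ k : Fin t, F (Fin.castLE ht k) := by
  classical
  have hm : ∑ k : Fin t, F (Fin.castLE ht k)
      = ∑ k ∈ Finset.univ.map (Fin.castLEEmb ht), F k :=
    (Finset.sum_map Finset.univ (Fin.castLEEmb ht) F).symm
  rw [hm]
  refine (Finset.sum_subset (Finset.subset_univ _) ?_).symm
  intro k _ hk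
  refine hv k ?_
  by_contra h
  push_neg at h
  exact hk (Finset.mem_map.mpr ⟨⟨(k : ℕ), h⟩, Finset.mem_univ _, by
    simp [Fin.castLEEmb, Fin.ext_iff]⟩)

theorem select_mul {K : Type*} [Semiring K] {s m n : ℕ}
    (f : Fin s → Fin m) (M : Matrix (Fin m) (Fin n) K) :
    (Matrix.of fun (i : Fin s) (k : Fin m) => if f i = k then (1 : K) else 0) * M
      = M.submatrix f id := by
  ext i j
  simp [Matrix.mul_apply, ite_mul]

theorem mul_select {K : Type*} [Semiring K] {s m n : ℕ}
    (g : Fin s → Fin n) (M : Matrix (Fin m) (Fin n) K) :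
    M * (Matrix.of fun (k : Fin n) (j : Fin s) => if k = g j then (1 : K) else 0)
      = M.submatrix id g := by
  ext i j
  simp [Matrix.mul_apply, mul_ite]

theorem permMatrix_map {D K : Type*} [Semiring D] [Semiring K] (φ : D →+* K)
    {m : Type*} [Fintype m] [DecidableEq m] (σ : Equiv.Perm m) :
    (σ.permMatrix D).map φ = σ.permMatrix K := by
  ext i j
  simp [Equiv.Perm.permMatrix, PEquiv.toMatrix_apply, Matrix.map_apply, apply_ite φ]

theorem perm_isUnit_det {K : Type*} [Field K] {m : Type*} [Fintype m] [DecidableEq m]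
    (σ : Equiv.Perm m) : IsUnit (σ.permMatrix K).det := by
  rw [Matrix.det_permutation]
  rcases Int.units_eq_one_or (Equiv.Perm.sign σ) with h | h <;> simp [h]


theorem bareiss_elim {K : Type*} [Field K] :
    ∀ (m n : ℕ) (B : Matrix (Fin m) (Fin n) K),
    ∃ (s : ℕ) (hsm : s ≤ m) (hsn : s ≤ n) (σ : Equiv.Perm (Fin m)) (τ : Equiv.Perm (Fin n))
      (L : Matrix (Fin m) (Fin s) K) (U : Matrix (Fin s) (Fin n) K),
      (∀ (i : Fin m) (j : Fin s), (i : ℕ) < (j : ℕ) → L i j = 0) ∧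
      (∀ i : Fin s, L (Fin.castLE hsm i) i = 1) ∧
      (∀ (i : Fin s) (j : Fin n), (j : ℕ) < (i : ℕ) → U i j = 0) ∧
      (∀ i : Fin s, U i (Fin.castLE hsn i) ≠ 0) ∧
      B.submatrix σ τ = L * U := by
  intro m
  induction m with
  | zero =>
    intro n B
    refine ⟨0, le_rfl, Nat.zero_le _, 1, 1, Matrix.of fun i j => j.elim0,
      Matrix.of fun i j => i.elim0, fun i => i.elim0, fun i => i.elim0,
      fun i => i.elim0, fun i => i.elim0, ?_⟩
    ext i j
    exact i.elim0
  | succ m IH =>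
    intro n B
    by_cases hB : B = 0
    · refine ⟨0, Nat.zero_le _, Nat.zero_le _, 1, 1, Matrix.of fun i j => j.elim0,
        Matrix.of fun i j => i.elim0, fun i j => j.elim0, fun i => i.elim0,
        fun i => i.elim0, fun i => i.elim0, ?_⟩
      ext i j
      simp [hB, Matrix.mul_apply]
    · -- find a pivot
      have : ∃ i0 j0, B i0 j0 ≠ 0 := by
        by_contra h
        push_neg at h
        exact hB (by ext i j; exact h i j)
      obtain ⟨i0, j0, hpiv⟩ := this
      rcases n with _ | n'
      · exact j0.elim0
      set B1 : Matrix (Fin (m + 1)) (Fin (n' + 1)) K :=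
        B.submatrix (Equiv.swap 0 i0) (Equiv.swap 0 j0) with hB1
      have ha : B1 0 0 ≠ 0 := by
        simpa [hB1, Equiv.swap_apply_left] using hpiv
      set a : K := B1 0 0 with haa
      set B2 : Matrix (Fin m) (Fin n') K :=
        Matrix.of fun i j => B1 i.succ j.succ - B1 i.succ 0 / a * B1 0 j.succ with hB2
      obtain ⟨s', hsm', hsn', σ', τ', L', U', hLlow, hLdiag, hUup, hUdiag, hLU⟩ := IH n' B2
      -- lifted permutations
      set σ : Equiv.Perm (Fin (m + 1)) :=
        Equiv.swap 0 i0 * Equiv.Perm.decomposeFin.symm (0, σ') with hσ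
      set τ : Equiv.Perm (Fin (n' + 1)) :=
        Equiv.swap 0 j0 * Equiv.Perm.decomposeFin.symm (0, τ') with hτ
      have hσ0 : σ 0 = Equiv.swap 0 i0 0 := by
        simp [hσ, Equiv.Perm.mul_apply]
      have hσs : ∀ x : Fin m, σ x.succ = Equiv.swap 0 i0 (σ' x).succ := by
        intro x
        simp [hσ, Equiv.Perm.mul_apply, Equiv.Perm.decomposeFin_symm_apply_succ]
      have hτ0 : τ 0 = Equiv.swap 0 j0 0 := by
        simp [hτ, Equiv.Perm.mul_apply]
      have hτs : ∀ y : Fin n', τ y.succ = Equiv.swap 0 j0 (τ' y).succ := by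
        intro y
        simp [hτ, Equiv.Perm.mul_apply, Equiv.Perm.decomposeFin_symm_apply_succ]
      set L : Matrix (Fin (m + 1)) (Fin (s' + 1)) K :=
        Matrix.of fun i =>
          Fin.cases (motive := fun _ => Fin (s' + 1) → K)
            (fun j => Fin.cases 1 (fun _ => 0) j)
            (fun i' j => Fin.cases (B1 (σ' i').succ 0 / a) (fun j' => L' i' j') j) i with hL
      set U : Matrix (Fin (s' + 1)) (Fin (n' + 1)) K :=
        Matrix.of fun i =>
          Fin.cases (motive := fun _ => Fin (n' + 1) → K)
            (fun j => Fin.cases a (fun j' => B1 0 (τ' j').succ) j)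
            (fun i' j => Fin.cases 0 (fun j' => U' i' j') j) i with hU
      refine ⟨s' + 1, Nat.succ_le_succ hsm', Nat.succ_le_succ hsn', σ, τ, L, U, ?_, ?_, ?_, ?_, ?_⟩
      · -- L lower triangular
        intro i j hij
        induction i using Fin.cases with
        | zero =>
          induction j using Fin.cases with
          | zero => simp at hij
          | succ j' => simp [hL]
        | succ i' =>
          induction j using Fin.cases with
          | zero => simp at hij
          | succ j' =>
            simp only [Fin.val_succ, Nat.succ_lt_succ_iff] at hij
            simp [hL, hLlow i' j' hij]
      · -- L unit diagonal
        intro i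
        induction i using Fin.cases with
        | zero =>
          have h0 : Fin.castLE (Nat.succ_le_succ hsm') (0 : Fin (s' + 1)) = 0 := rfl
          simp [hL, h0]
        | succ i' =>
          have hc : Fin.castLE (Nat.succ_le_succ hsm') i'.succ
              = (Fin.castLE hsm' i').succ := rfl
          rw [hc]
          simp [hL, hLdiag i']
      · -- U upper triangular
        intro i j hij
        induction i using Fin.cases with
        | zero => simp at hij
        | succ i' =>
          induction j using Fin.cases with
          | zero => simp [hU]
          | succ j' =>
            simp only [Fin.val_succ, Nat.succ_lt_succ_iff] at hij
            simp [hU, hUup i' j' hij]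
      · -- U nonzero diagonal
        intro i
        induction i using Fin.cases with
        | zero =>
          have h0 : Fin.castLE (Nat.succ_le_succ hsn') (0 : Fin (s' + 1)) = 0 := rfl
          simpa [hU, h0] using ha
        | succ i' =>
          have hc : Fin.castLE (Nat.succ_le_succ hsn') i'.succ
              = (Fin.castLE hsn' i').succ := rfl
          rw [hc]
          simpa [hU] using hUdiag i'
      · -- the factorization
        have hLU' : ∀ x y, B2 (σ' x) (τ' y) = ∑ k, L' x k * U' k y := by
          intro x y
          have := congrFun (congrFun hLU x) y
          simpa [Matrix.mul_apply] using this
        ext x y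
        rw [Matrix.submatrix_apply, Matrix.mul_apply, Fin.sum_univ_succ]
        induction x using Fin.cases with
        | zero =>
          induction y using Fin.cases with
          | zero =>
            simp [hσ0, hτ0, hL, hU, haa, hB1, Equiv.swap_apply_left]
          | succ y' =>
            simp [hσ0, hτs, hL, hU, hB1, Equiv.swap_apply_left]
        | succ x' =>
          induction y using Fin.cases with
          | zero =>
            have : B (σ x'.succ) (τ 0) = B1 (σ' x').succ 0 := by
              rw [hσs, hτ0, hB1]; rfl
            rw [this]
            simp only [hL, hU, Matrix.of_apply, Fin.cases_succ, Fin.cases_zero]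
            rw [div_mul_cancel₀ _ ha]
            simp
          | succ y' =>
            have h1 : B (σ x'.succ) (τ y'.succ) = B1 (σ' x').succ (τ' y').succ := by
              rw [hσs, hτs, hB1]; rfl
            rw [h1]
            have h2 : B1 (σ' x').succ (τ' y').succ
                = B2 (σ' x') (τ' y') + B1 (σ' x').succ 0 / a * B1 0 (τ' y').succ := by
              simp [hB2]
            rw [h2, hLU' x' y']
            simp only [hL, hU, Matrix.of_apply, Fin.cases_succ, Fin.cases_zero]
            rw [div_eq_mul_inv]
            ring



/-- The diagonal matrix `D_g = diag(p₁, p₁p₂, p₂p₃, …, p_{r−1}p_r)` built from the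
pivots `p : Fin r → D` (0-indexed: entry `0` is `p 0`, entry `i > 0` is `p (i-1) * p i`). -/
def bareissDiag {D : Type*} [CommRing D] {r : ℕ} (p : Fin r → D) :
    Matrix (Fin r) (Fin r) D :=
  Matrix.diagonal fun i =>
    (if (i : ℕ) = 0 then 1
      else p ⟨(i : ℕ) - 1, lt_of_le_of_lt (Nat.sub_le _ _) i.isLt⟩) * p i

/-- Fraction-free `L D⁻¹ U` decomposition (Theorem 1 of the paper):
every `m × n` matrix `A` over an integral domain `D` of rank `r` (over the fraction
field `K`) can be written as `A = P_r · L · D_g⁻¹ · U · P_c` over `K`, with `L`, `U`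
triangular matrices over `D` having equal nonzero diagonals `p₁, …, p_r`, permutation
matrices `P_r`, `P_c`, and `D_g = diag(p₁, p₁p₂, …, p_{r−1}p_r)`. -/
theorem stmt0 {D K : Type*} [CommRing D] [IsDomain D] [Field K] [Algebra D K]
    [IsFractionRing D K] {m n : ℕ} (A : Matrix (Fin m) (Fin n) D) {r : ℕ}
    (hrank : (A.map (algebraMap D K)).rank = r) :
    ∃ (hrm : r ≤ m) (hrn : r ≤ n) (Pr : Matrix (Fin m) (Fin m) D)
      (Pc : Matrix (Fin n) (Fin n) D) (L : Matrix (Fin m) (Fin r) D)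
      (U : Matrix (Fin r) (Fin n) D),
      (∃ σ : Equiv.Perm (Fin m), Pr = σ.permMatrix D) ∧
      (∃ τ : Equiv.Perm (Fin n), Pc = τ.permMatrix D) ∧
      (∀ (i : Fin m) (j : Fin r), (i : ℕ) < (j : ℕ) → L i j = 0) ∧
      (∀ i : Fin r, L (Fin.castLE hrm i) i ≠ 0) ∧
      (∀ (i : Fin r) (j : Fin n), (j : ℕ) < (i : ℕ) → U i j = 0) ∧
      (∀ i : Fin r, U i (Fin.castLE hrn i) = L (Fin.castLE hrm i) i) ∧
      A.map (algebraMap D K) =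
        Pr.map (algebraMap D K) * L.map (algebraMap D K) *
          ((bareissDiag fun i : Fin r => L (Fin.castLE hrm i) i).map (algebraMap D K))⁻¹ *
          U.map (algebraMap D K) * Pc.map (algebraMap D K) := by
  classical
  set φ := algebraMap D K with hφ
  have hφinj : Function.Injective φ := IsFractionRing.injective D K
  set B : Matrix (Fin m) (Fin n) K := A.map φ with hBdef
  obtain ⟨s, hsm, hsn, σ, τ, L, U, hLlow, hLdiag, hUup, hUdiag, hLU⟩ := bareiss_elim m n B
  -- rank computation: s = r
  have hdetL0 : (L.submatrix (Fin.castLE hsm) id).det = 1 := by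
    rw [Matrix.det_of_lowerTriangular _ ?_]
    · exact Finset.prod_eq_one fun i _ => hLdiag i
    · intro i j hij
      rw [OrderDual.toDual_lt_toDual] at hij
      exact hLlow _ _ hij
  have hdetU0 : (U.submatrix id (Fin.castLE hsn)).det ≠ 0 := by
    rw [Matrix.det_of_upperTriangular ?_]
    · exact Finset.prod_ne_zero_iff.mpr fun i _ => hUdiag i
    · intro i j hij
      exact hUup _ _ hij
  have hTfac : (L * U).submatrix (Fin.castLE hsm) (Fin.castLE hsn)
      = L.submatrix (Fin.castLE hsm) id * U.submatrix id (Fin.castLE hsn) := by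
    ext i j
    simp [Matrix.mul_apply]
  have hdetT : ((L * U).submatrix (Fin.castLE hsm) (Fin.castLE hsn)).det ≠ 0 := by
    rw [hTfac, Matrix.det_mul, hdetL0, one_mul]
    exact hdetU0
  have hrankLU : (L * U).rank = s := by
    refine le_antisymm ((Matrix.rank_mul_le_left L U).trans (Matrix.rank_le_width L)) ?_
    have h1 : (Matrix.of fun (i : Fin s) (k : Fin m) =>
          if Fin.castLE hsm i = k then (1 : K) else 0) * (L * U) *
          (Matrix.of fun (k : Fin n) (j : Fin s) => if k = Fin.castLE hsn j then (1 : K) else 0)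
        = (L * U).submatrix (Fin.castLE hsm) (Fin.castLE hsn) := by
      rw [select_mul, mul_select]
      rfl
    have h2 : ((L * U).submatrix (Fin.castLE hsm) (Fin.castLE hsn)).rank = s := by
      rw [Matrix.rank_of_isUnit _ ((Matrix.isUnit_iff_isUnit_det _).mpr
        (isUnit_iff_ne_zero.mpr hdetT))]
      exact Fintype.card_fin s
    calc s = ((L * U).submatrix (Fin.castLE hsm) (Fin.castLE hsn)).rank := h2.symm
      _ ≤ _ := by
          rw [← h1]
          exact (Matrix.rank_mul_le_left _ _).trans (Matrix.rank_mul_le_right _ _)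
  have hrankB : B.rank = s := by
    have e1 : (σ.toPEquiv.toMatrix : Matrix (Fin m) (Fin m) K) * (B * (τ.symm.toPEquiv.toMatrix : Matrix (Fin n) (Fin n) K)) = B.submatrix σ τ := by
      rw [PEquiv.mul_toMatrix_toPEquiv, PEquiv.toMatrix_toPEquiv_mul]
      simp [Matrix.submatrix_submatrix]
    have e2 : (B.submatrix σ τ).rank = B.rank := by
      rw [← e1, Matrix.rank_mul_eq_right_of_isUnit_det _ _ (perm_isUnit_det σ),
        Matrix.rank_mul_eq_left_of_isUnit_det _ _ (perm_isUnit_det τ.symm)]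
    rw [← e2, hLU, hrankLU]
  obtain rfl : r = s := hrank.symm.trans hrankB
  -- integer side
  set CD : Matrix (Fin m) (Fin n) D := A.submatrix σ τ with hCDdef
  have hCmap : CD.map φ = L * U := by
    rw [← hLU, hBdef]
    rfl
  set u : Fin r → K := fun i => U i (Fin.castLE hsn i) with hudef
  set Pu : ℕ → K := fun t => ∏ k ∈ Finset.range t, (if h : k < r then u ⟨k, h⟩ else 1)
    with hPudef
  have hu0 : ∀ i, u i ≠ 0 := fun i => hUdiag i
  have hPu0 : ∀ t, Pu t ≠ 0 := by
    intro t
    rw [hPudef]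
    refine Finset.prod_ne_zero_iff.mpr fun k _ => ?_
    split
    · exact hu0 _
    · exact one_ne_zero
  have hPuzero : Pu 0 = 1 := by rw [hPudef]; simp
  have hPusucc : ∀ i : Fin r, Pu ((i : ℕ) + 1) = Pu (i : ℕ) * u i := by
    intro i
    rw [hPudef]
    simp only
    rw [Finset.prod_range_succ, dif_pos i.isLt]
  have hPuF : ∀ (t : ℕ) (ht : t ≤ r), Pu t = ∏ k : Fin t, u (Fin.castLE ht k) := by
    intro t ht
    rw [hPudef]
    simp only
    rw [← Fin.prod_univ_eq_prod_range (fun k => if h : k < r then u ⟨k, h⟩ else 1) t]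
    refine Finset.prod_congr rfl fun k _ => ?_
    rw [dif_pos (lt_of_lt_of_le k.isLt ht)]
    rfl
  -- factorization of submatrices of L * U
  have hfacL : ∀ (j : Fin r) (f : Fin ((j : ℕ) + 1) → Fin m),
      (L * U).submatrix f (Fin.castLE (le_trans j.isLt hsn))
        = L.submatrix f (Fin.castLE j.isLt)
          * U.submatrix (Fin.castLE j.isLt) (Fin.castLE (le_trans j.isLt hsn)) := by
    intro j f
    ext x y
    simp only [Matrix.submatrix_apply, Matrix.mul_apply]
    refine sum_truncate j.isLt _ fun k hk => ?_
    exact mul_eq_zero_of_right _ (hUup k _ (lt_of_lt_of_le y.isLt hk))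
  have hfacU : ∀ (i : Fin r) (g : Fin ((i : ℕ) + 1) → Fin n),
      (L * U).submatrix (Fin.castLE (le_trans i.isLt hsm)) g
        = L.submatrix (Fin.castLE (le_trans i.isLt hsm)) (Fin.castLE i.isLt)
          * U.submatrix (Fin.castLE i.isLt) g := by
    intro i g
    ext x y
    simp only [Matrix.submatrix_apply, Matrix.mul_apply]
    refine sum_truncate i.isLt _ fun k hk => ?_
    exact mul_eq_zero_of_left (hLlow _ k (lt_of_lt_of_le x.isLt hk)) _
  -- determinants of the triangular pieces
  have hdetLtri : ∀ i : Fin r,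
      (L.submatrix (Fin.castLE (le_trans i.isLt hsm)) (Fin.castLE i.isLt)).det = 1 := by
    intro i
    rw [Matrix.det_of_lowerTriangular _ ?_]
    · refine Finset.prod_eq_one fun x _ => ?_
      rw [Matrix.submatrix_apply]
      exact hLdiag (Fin.castLE i.isLt x)
    · intro x y hxy
      rw [OrderDual.toDual_lt_toDual] at hxy
      exact hLlow _ _ hxy
  have hdetUtri : ∀ j : Fin r,
      (U.submatrix (Fin.castLE j.isLt) (Fin.castLE (le_trans j.isLt hsn))).det
        = Pu ((j : ℕ) + 1) := by
    intro j
    rw [Matrix.det_of_upperTriangular ?_]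
    · rw [hPuF ((j : ℕ) + 1) j.isLt]
      refine Finset.prod_congr rfl fun x _ => ?_
      rw [Matrix.submatrix_apply]
      rfl
    · intro x y hxy
      exact hUup _ _ hxy
  have hdetLsnoc : ∀ (j : Fin r) (i : Fin m),
      (L.submatrix (Fin.snoc (Fin.castLE (le_trans (le_of_lt j.isLt) hsm)) i)
        (Fin.castLE j.isLt)).det = L i j := by
    intro j i
    rw [Matrix.det_of_lowerTriangular _ ?_]
    · rw [Fin.prod_univ_castSucc]
      have hlast : (L.submatrix (Fin.snoc (Fin.castLE (le_trans (le_of_lt j.isLt) hsm)) i)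
          (Fin.castLE j.isLt)) (Fin.last _) (Fin.last _) = L i j := by
        rw [Matrix.submatrix_apply, Fin.snoc_last]
        congr 1
      rw [hlast]
      have hone : ∀ x : Fin (j : ℕ),
          (L.submatrix (Fin.snoc (Fin.castLE (le_trans (le_of_lt j.isLt) hsm)) i)
            (Fin.castLE j.isLt)) x.castSucc x.castSucc = 1 := by
        intro x
        rw [Matrix.submatrix_apply, Fin.snoc_castSucc]
        exact hLdiag (Fin.castLE j.isLt x.castSucc)
      rw [Finset.prod_eq_one fun x _ => hone x, one_mul]
    · intro x y hxy
      rw [OrderDual.toDual_lt_toDual] at hxy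
      obtain ⟨x', rfl⟩ := Fin.exists_castSucc_eq.2 (Fin.ne_last_of_lt hxy)
      rw [Matrix.submatrix_apply, Fin.snoc_castSucc]
      exact hLlow _ _ hxy
  have hdetUsnoc : ∀ (i : Fin r) (j : Fin n),
      (U.submatrix (Fin.castLE i.isLt)
        (Fin.snoc (Fin.castLE (le_trans (le_of_lt i.isLt) hsn)) j)).det
        = Pu (i : ℕ) * U i j := by
    intro i j
    rw [Matrix.det_of_upperTriangular ?_]
    · rw [Fin.prod_univ_castSucc]
      have hlast : (U.submatrix (Fin.castLE i.isLt)
          (Fin.snoc (Fin.castLE (le_trans (le_of_lt i.isLt) hsn)) j))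
            (Fin.last _) (Fin.last _) = U i j := by
        rw [Matrix.submatrix_apply, Fin.snoc_last]
        congr 1
      rw [hlast, hPuF (i : ℕ) (le_of_lt i.isLt)]
      congr 1
      refine Finset.prod_congr rfl fun x _ => ?_
      rw [Matrix.submatrix_apply, Fin.snoc_castSucc]
      rfl
    · intro x y hxy
      obtain ⟨y', rfl⟩ := Fin.exists_castSucc_eq.2 (Fin.ne_last_of_lt hxy)
      rw [Matrix.submatrix_apply, Fin.snoc_castSucc]
      exact hUup _ _ hxy
  -- the integral matrices of minors
  set LD : Matrix (Fin m) (Fin r) D := Matrix.of fun i j =>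
    (CD.submatrix (Fin.snoc (Fin.castLE (le_trans (le_of_lt j.isLt) hsm)) i)
      (Fin.castLE (le_trans j.isLt hsn))).det with hLDdef
  set UD : Matrix (Fin r) (Fin n) D := Matrix.of fun i j =>
    (CD.submatrix (Fin.castLE (le_trans i.isLt hsm))
      (Fin.snoc (Fin.castLE (le_trans (le_of_lt i.isLt) hsn)) j)).det with hUDdef
  have hmapdet : ∀ {t : ℕ} (f : Fin t → Fin m) (g : Fin t → Fin n),
      φ ((CD.submatrix f g).det) = ((L * U).submatrix f g).det := by
    intro t f g
    rw [RingHom.map_det, ← hCmap]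
    rfl
  have hφL : ∀ (i : Fin m) (j : Fin r), φ (LD i j) = L i j * Pu ((j : ℕ) + 1) := by
    intro i j
    rw [hLDdef]
    show φ ((CD.submatrix _ _).det) = _
    rw [hmapdet, hfacL j _, Matrix.det_mul, hdetLsnoc, hdetUtri]
  have hφU : ∀ (i : Fin r) (j : Fin n), φ (UD i j) = Pu (i : ℕ) * U i j := by
    intro i j
    rw [hUDdef]
    show φ ((CD.submatrix _ _).det) = _
    rw [hmapdet, hfacU i _, Matrix.det_mul, hdetLtri, hdetUsnoc, one_mul]
  refine ⟨hsm, hsn, (σ⁻¹).permMatrix D, τ.permMatrix D, LD, UD,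
    ⟨σ⁻¹, rfl⟩, ⟨τ, rfl⟩, ?_, ?_, ?_, ?_, ?_⟩
  · intro i j hij
    apply hφinj
    rw [hφL, hLlow _ _ hij, zero_mul, map_zero]
  · intro i h
    have h2 := hφL (Fin.castLE hsm i) i
    rw [h, map_zero, hLdiag i, one_mul] at h2
    exact hPu0 _ h2.symm
  · intro i j hij
    apply hφinj
    rw [hφU, hUup _ _ hij, mul_zero, map_zero]
  · intro i
    apply hφinj
    rw [hφU, hφL, hLdiag i, one_mul, hPusucc i]
  · -- the identity over K
    have hLmapφ : LD.map φ = L * Matrix.diagonal (fun j : Fin r => Pu ((j : ℕ) + 1)) := by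
      ext i j
      rw [Matrix.map_apply, hφL, Matrix.mul_diagonal]
    have hUmapφ : UD.map φ = Matrix.diagonal (fun i : Fin r => Pu (i : ℕ)) * U := by
      ext i j
      rw [Matrix.map_apply, hφU, Matrix.diagonal_mul]
    set p : Fin r → D := fun i => LD (Fin.castLE hsm i) i with hpdef
    have hφp : ∀ i : Fin r, φ (p i) = Pu ((i : ℕ) + 1) := by
      intro i
      rw [hpdef]
      simp only
      rw [hφL, hLdiag i, one_mul]
    have hDg : (bareissDiag p).map φ
        = Matrix.diagonal (fun i : Fin r => Pu (i : ℕ) * Pu ((i : ℕ) + 1)) := by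
      unfold bareissDiag
      rw [Matrix.diagonal_map (map_zero φ)]
      refine congrArg Matrix.diagonal (funext fun i => ?_)
      show φ ((if (i : ℕ) = 0 then 1
          else p ⟨(i : ℕ) - 1, lt_of_le_of_lt (Nat.sub_le _ _) i.isLt⟩) * p i)
        = Pu (i : ℕ) * Pu ((i : ℕ) + 1)
      rw [_root_.map_mul]
      by_cases h0 : (i : ℕ) = 0
      · rw [if_pos h0, _root_.map_one, hφp, h0, hPuzero]
      · rw [if_neg h0, hφp, hφp]
        show Pu ((i : ℕ) - 1 + 1) * _ = _
        have he : (i : ℕ) - 1 + 1 = (i : ℕ) := by omega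
        rw [he]
    have hDginv : (Matrix.diagonal (fun i : Fin r => Pu (i : ℕ) * Pu ((i : ℕ) + 1)))⁻¹
        = Matrix.diagonal (fun i : Fin r => (Pu (i : ℕ) * Pu ((i : ℕ) + 1))⁻¹) := by
      apply Matrix.inv_eq_right_inv
      rw [Matrix.diagonal_mul_diagonal, ← Matrix.diagonal_one]
      exact congrArg Matrix.diagonal
        (funext fun i => mul_inv_cancel₀ (mul_ne_zero (hPu0 _) (hPu0 _)))
    have hperm : B = (σ⁻¹).permMatrix K * (L * U) * τ.permMatrix K := by
      rw [← hLU, PEquiv.mul_toMatrix_toPEquiv, PEquiv.toMatrix_toPEquiv_mul]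
      ext i j
      simp [Matrix.submatrix_apply, show ∀ x, σ (σ⁻¹ x) = x from fun x => σ.apply_symm_apply x]
    have hmid : L * Matrix.diagonal (fun j : Fin r => Pu ((j : ℕ) + 1))
        * Matrix.diagonal (fun i : Fin r => (Pu (i : ℕ) * Pu ((i : ℕ) + 1))⁻¹)
        * (Matrix.diagonal (fun i : Fin r => Pu (i : ℕ)) * U) = L * U := by
      rw [Matrix.mul_assoc L, Matrix.diagonal_mul_diagonal, Matrix.mul_assoc L,
        ← Matrix.mul_assoc (Matrix.diagonal _), Matrix.diagonal_mul_diagonal]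
      have hone : (fun i : Fin r =>
          Pu ((i : ℕ) + 1) * (Pu (i : ℕ) * Pu ((i : ℕ) + 1))⁻¹ * Pu (i : ℕ))
          = fun _ : Fin r => (1 : K) := by
        funext i
        have h1 := hPu0 (i : ℕ)
        have h2 := hPu0 ((i : ℕ) + 1)
        field_simp
      rw [hone, Matrix.diagonal_one, Matrix.one_mul]
    rw [permMatrix_map φ, permMatrix_map φ, hLmapφ, hUmapφ, hDg, hDginv, hperm, ← hmid]
    simp only [Matrix.mul_assoc]
end

section
/- Let D be an integral domain with fraction field K and let A ∈ D^{m×n} have rank r over K. Suppose A = P_r · L · D_g^{−1} · U · P_c over K, where P_r, P_c are permutation matrices, L ∈ D^{m×r} is lower triangular with L_{ii} = p_i ≠ 0, U ∈ D^{r×n} is upper triangular with U_{ii} = p_i, and D_g = diag(p_1, p_1p_2, p_2p_3, …, p_{r−1}p_r). Let d_1, …, d_r ∈ D be nonzero elements such that d_k divides every entry of the k-th row of U, and set D_U = diag(d_1, …, d_r). Then the matrices Û = D_U^{−1}·U and D̂ = D_g·D_U^{−1} have all their entries in D, and A = P_r · L · D̂^{−1} · Û · P_c holds over K. -/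
/-- (Corollary 4 of the paper.)  Given a fraction-free decomposition
`A = P_r · L · D_g⁻¹ · U · P_c` over the fraction field `K`, and nonzero `d₁, …, d_r ∈ D`
such that `d_k` divides every entry of the `k`-th row of `U`, the matrices
`Û = D_U⁻¹ · U` and `D̂ = D_g · D_U⁻¹` (computed over `K`, with `D_U = diag(d₁,…,d_r)`)
have all their entries in `D`, and `A = P_r · L · D̂⁻¹ · Û · P_c` over `K`. -/
theorem stmt1 {D K : Type*} [CommRing D] [IsDomain D] [Field K] [Algebra D K]
    [IsFractionRing D K] {m n r : ℕ} (hrm : r ≤ m) (hrn : r ≤ n)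
    (A : Matrix (Fin m) (Fin n) D) (hrank : (A.map (algebraMap D K)).rank = r)
    (Pr : Matrix (Fin m) (Fin m) D) (Pc : Matrix (Fin n) (Fin n) D)
    (L : Matrix (Fin m) (Fin r) D) (U : Matrix (Fin r) (Fin n) D)
    (hPr : ∃ σ : Equiv.Perm (Fin m), Pr = σ.permMatrix D)
    (hPc : ∃ τ : Equiv.Perm (Fin n), Pc = τ.permMatrix D)
    (hL : ∀ (i : Fin m) (j : Fin r), (i : ℕ) < (j : ℕ) → L i j = 0)
    (hp : ∀ i : Fin r, L (Fin.castLE hrm i) i ≠ 0)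
    (hU : ∀ (i : Fin r) (j : Fin n), (j : ℕ) < (i : ℕ) → U i j = 0)
    (hdiag : ∀ i : Fin r, U i (Fin.castLE hrn i) = L (Fin.castLE hrm i) i)
    (hA : A.map (algebraMap D K) =
      Pr.map (algebraMap D K) * L.map (algebraMap D K) *
        ((bareissDiag fun i : Fin r => L (Fin.castLE hrm i) i).map (algebraMap D K))⁻¹ *
        U.map (algebraMap D K) * Pc.map (algebraMap D K))
    (d : Fin r → D) (hd0 : ∀ k, d k ≠ 0)
    (hdvd : ∀ (k : Fin r) (j : Fin n), d k ∣ U k j) :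
    (∀ (k : Fin r) (j : Fin n), ∃ c : D,
      (((Matrix.diagonal d).map (algebraMap D K))⁻¹ * U.map (algebraMap D K)) k j =
        algebraMap D K c) ∧
    (∀ k l : Fin r, ∃ c : D,
      ((bareissDiag fun i : Fin r => L (Fin.castLE hrm i) i).map (algebraMap D K) *
        ((Matrix.diagonal d).map (algebraMap D K))⁻¹) k l = algebraMap D K c) ∧
    A.map (algebraMap D K) =
      Pr.map (algebraMap D K) * L.map (algebraMap D K) *
        ((bareissDiag fun i : Fin r => L (Fin.castLE hrm i) i).map (algebraMap D K) *
          ((Matrix.diagonal d).map (algebraMap D K))⁻¹)⁻¹ *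
        (((Matrix.diagonal d).map (algebraMap D K))⁻¹ * U.map (algebraMap D K)) *
        Pc.map (algebraMap D K) := by
  classical
  set f := algebraMap D K with hfdef
  have hfinj : Function.Injective f := IsFractionRing.injective D K
  set b : Fin r → D := fun i =>
    (if (i : ℕ) = 0 then 1
      else (fun i : Fin r => L (Fin.castLE hrm i) i)
        ⟨(i : ℕ) - 1, lt_of_le_of_lt (Nat.sub_le _ _) i.isLt⟩) *
      L (Fin.castLE hrm i) i with hb
  have hbdiag : bareissDiag (fun i : Fin r => L (Fin.castLE hrm i) i)
      = Matrix.diagonal b := rfl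
  have hb0 : ∀ i, b i ≠ 0 := by
    intro i
    refine mul_ne_zero ?_ (hp i)
    split
    · exact one_ne_zero
    · exact hp _
  have hfne : ∀ x : D, x ≠ 0 → f x ≠ 0 := by
    intro x hx h
    exact hx (hfinj (by rw [h, map_zero]))
  have hfb0 : ∀ i, f (b i) ≠ 0 := fun i => hfne _ (hb0 i)
  have hfd0' : ∀ i, f (d i) ≠ 0 := fun i => hfne _ (hd0 i)
  have hDgmap : (bareissDiag fun i : Fin r => L (Fin.castLE hrm i) i).map f
      = Matrix.diagonal (fun i => f (b i)) := by
    rw [hbdiag, Matrix.diagonal_map (map_zero f)]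
  have hDdinv : ((Matrix.diagonal d).map f)⁻¹
      = Matrix.diagonal (fun i => (f (d i))⁻¹) := by
    apply Matrix.inv_eq_right_inv
    rw [Matrix.diagonal_map (map_zero f), Matrix.diagonal_mul_diagonal,
      show (fun i => f (d i) * (f (d i))⁻¹) = fun _ => (1 : K) from
        funext fun i => mul_inv_cancel₀ (hfd0' i), Matrix.diagonal_one]
  have hDginv : ((bareissDiag fun i : Fin r => L (Fin.castLE hrm i) i).map f)⁻¹
      = Matrix.diagonal (fun i => (f (b i))⁻¹) := by
    apply Matrix.inv_eq_right_inv
    rw [hDgmap, Matrix.diagonal_mul_diagonal,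
      show (fun i => f (b i) * (f (b i))⁻¹) = fun _ => (1 : K) from
        funext fun i => mul_inv_cancel₀ (hfb0 i), Matrix.diagonal_one]
  have hdvdb : ∀ k, d k ∣ b k := by
    intro k
    have h1 : d k ∣ L (Fin.castLE hrm k) k := (hdiag k) ▸ hdvd k (Fin.castLE hrn k)
    exact Dvd.dvd.mul_left h1 _
  refine ⟨?_, ?_, ?_⟩
  · intro k j
    obtain ⟨c, hc⟩ := hdvd k j
    refine ⟨c, ?_⟩
    rw [hDdinv, Matrix.diagonal_mul, Matrix.map_apply, hc, map_mul,
      inv_mul_cancel_left₀ (hfd0' k)]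
  · intro k l
    rw [hDgmap, hDdinv, Matrix.diagonal_mul_diagonal]
    by_cases hkl : k = l
    · subst hkl
      obtain ⟨c, hc⟩ := hdvdb k
      refine ⟨c, ?_⟩
      rw [Matrix.diagonal_apply_eq, hc, map_mul, mul_comm (f (d k)), mul_assoc,
        mul_inv_cancel₀ (hfd0' k), mul_one]
    · exact ⟨0, by rw [Matrix.diagonal_apply_ne _ hkl, map_zero]⟩
  · have hXinv : ((bareissDiag fun i : Fin r => L (Fin.castLE hrm i) i).map f *
        ((Matrix.diagonal d).map f)⁻¹)⁻¹
        = Matrix.diagonal (fun i => f (d i) * (f (b i))⁻¹) := by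
      apply Matrix.inv_eq_right_inv
      rw [hDgmap, hDdinv, Matrix.diagonal_mul_diagonal, Matrix.diagonal_mul_diagonal,
        show (fun i => f (b i) * (f (d i))⁻¹ * (f (d i) * (f (b i))⁻¹)) = fun _ => (1 : K)
          from funext fun i => by
            field_simp
            rw [mul_comm (f (b i))]
            exact div_self (mul_ne_zero (hfd0' i) (hfb0 i)),
        Matrix.diagonal_one]
    have key : ((bareissDiag fun i : Fin r => L (Fin.castLE hrm i) i).map f *
        ((Matrix.diagonal d).map f)⁻¹)⁻¹ * ((Matrix.diagonal d).map f)⁻¹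
        = ((bareissDiag fun i : Fin r => L (Fin.castLE hrm i) i).map f)⁻¹ := by
      rw [hXinv, hDdinv, hDginv, Matrix.diagonal_mul_diagonal]
      refine congrArg Matrix.diagonal (funext fun i => ?_)
      rw [mul_comm (f (d i)), mul_assoc, mul_inv_cancel₀ (hfd0' i), mul_one]
    have key2 : ∀ M : Matrix (Fin r) (Fin n) K,
        ((bareissDiag fun i : Fin r => L (Fin.castLE hrm i) i).map f *
          ((Matrix.diagonal d).map f)⁻¹)⁻¹ * (((Matrix.diagonal d).map f)⁻¹ * M)
        = ((bareissDiag fun i : Fin r => L (Fin.castLE hrm i) i).map f)⁻¹ * M := by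
      intro M
      rw [← Matrix.mul_assoc, key]
    rw [hA]
    simp only [Matrix.mul_assoc]
    rw [key2]
end

section
/- Let K be a field and let A ∈ K^{n×n} be invertible. Suppose Θ, R ∈ K^{n×n} and an invertible diagonal matrix D ∈ K^{n×n} satisfy A = Θ · D^{−1} · R and ΘᵗΘ = D, where R is upper triangular with R_{nn} = (det A)². Then for every i with 1 ≤ i ≤ n, the entry in the last column of Θ satisfies Θ_{in} = (−1)^{n+i} · M_{i,n} · det A, where M_{i,n} denotes the (i,n) minor of A, i.e. the determinant of the (n−1)×(n−1) matrix obtained from A by deleting row i and column n. -/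
open Matrix

/-!
Since `ΘᵀΘ = D`, the decomposition gives `ΘᵀA = R`, hence `det A • Θᵀ = R · adj A`.
The last row of the upper triangular `R` is `(0, …, 0, (det A)²)`, so the last row of
`det A • Θᵀ` is `(det A)²` times the last row of `adj A`, whose entries are the signed
minors of `A` obtained by deleting the last column.
-/

namespace Matrix

theorem transpose_mul_eq_of_eq_mul_inv_mul {ι R : Type*} [Fintype ι] [DecidableEq ι]
    [CommRing R] {A Θ D S : Matrix ι ι R} (hA : A = Θ * D⁻¹ * S) (hΘ : Θᵀ * Θ = D)
    (hD : IsUnit D.det) : Θᵀ * A = S := by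
  rw [hA, ← Matrix.mul_assoc, ← Matrix.mul_assoc, hΘ, mul_nonsing_inv D hD, Matrix.one_mul]

theorem mul_apply_of_row_eq_zero_off_diag {ι R : Type*} [Fintype ι] [NonUnitalNonAssocSemiring R]
    {S B : Matrix ι ι R} {i : ι} (hS : ∀ k, k ≠ i → S i k = 0) (j : ι) :
    (S * B) i j = S i i * B i j := by
  rw [mul_apply, Finset.sum_eq_single i (fun k _ hk => by rw [hS k hk, zero_mul])
    (fun h => absurd (Finset.mem_univ i) h)]

theorem upperTriangular_mul_apply_last {R : Type*} [NonUnitalNonAssocSemiring R] {n : ℕ}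
    {S B : Matrix (Fin (n + 1)) (Fin (n + 1)) R} (hS : ∀ i j, j < i → S i j = 0)
    (j : Fin (n + 1)) : (S * B) (Fin.last n) j = S (Fin.last n) (Fin.last n) * B (Fin.last n) j :=
  mul_apply_of_row_eq_zero_off_diag (fun k hk => hS _ _ (lt_of_le_of_ne (Fin.le_last k) hk)) j

theorem adjugate_apply_last {R : Type*} [CommRing R] {n : ℕ}
    (A : Matrix (Fin (n + 1)) (Fin (n + 1)) R) (i : Fin (n + 1)) :
    adjugate A (Fin.last n) i =
      (-1) ^ (n + (i : ℕ)) * (A.submatrix i.succAbove Fin.castSucc).det := by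
  rw [adjugate_fin_succ_eq_det_submatrix, Fin.succAbove_last, Fin.val_last, Nat.add_comm]

end Matrix

theorem stmt12_general {K : Type*} [Field K] {n : ℕ}
    (A Θ R Dm : Matrix (Fin (n + 1)) (Fin (n + 1)) K)
    (hA : IsUnit A.det)
    (hDunit : IsUnit Dm.det)
    (hRtri : ∀ i j, j < i → R i j = 0)
    (hRnn : R (Fin.last n) (Fin.last n) = A.det ^ 2)
    (hdec : A = Θ * Dm⁻¹ * R) (hTh : Θᵀ * Θ = Dm) :
    ∀ i : Fin (n + 1),
      Θ i (Fin.last n) =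
        (-1) ^ (n + (i : ℕ)) * (A.submatrix i.succAbove Fin.castSucc).det * A.det := by
  intro i
  have hΘA : Θᵀ * A = R := transpose_mul_eq_of_eq_mul_inv_mul hdec hTh hDunit
  have key : A.det * Θ i (Fin.last n) = A.det * (adjugate A (Fin.last n) i * A.det) :=
    calc A.det * Θ i (Fin.last n) = (Θᵀ * A * adjugate A) (Fin.last n) i := by
          rw [Matrix.mul_assoc, mul_adjugate, Matrix.mul_smul, Matrix.mul_one, Matrix.smul_apply,
            transpose_apply, smul_eq_mul]
      _ = A.det * (adjugate A (Fin.last n) i * A.det) := by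
          rw [hΘA, upperTriangular_mul_apply_last hRtri, hRnn]
          ring
  rw [mul_left_cancel₀ hA.ne_zero key, adjugate_apply_last]

/-- (Theorem 13 of the paper.)  Let `A` be an invertible
`(n+1) × (n+1)` matrix over a field `K` with a fraction-free QR decomposition
`A = Θ · D⁻¹ · R`, `ΘᵀΘ = D`, where `R` is upper triangular with last diagonal
entry `(det A)²` and `D` is invertible diagonal.  Then each entry in the last
column of `Θ` is `(−1)^{n+i}` times the corresponding maximal minor of `A`
(delete row `i` and the last column) times `det A`.  (Indices are 0-indexed;
the sign matches the paper's 1-indexed `(−1)^{n+i}` for `n+1`-dimensional `A`.) -/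
theorem stmt12 {K : Type*} [Field K] {n : ℕ}
    (A Θ R Dm : Matrix (Fin (n + 1)) (Fin (n + 1)) K)
    (hA : IsUnit A.det)
    (hDdiag : ∀ i j, i ≠ j → Dm i j = 0) (hDunit : IsUnit Dm.det)
    (hRtri : ∀ i j, j < i → R i j = 0)
    (hRnn : R (Fin.last n) (Fin.last n) = A.det ^ 2)
    (hdec : A = Θ * Dm⁻¹ * R) (hTh : Θᵀ * Θ = Dm) :
    ∀ i : Fin (n + 1),
      Θ i (Fin.last n) =
        (-1) ^ (n + (i : ℕ)) * (A.submatrix i.succAbove Fin.castSucc).det * A.det :=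
  stmt12_general A Θ R Dm hA hDunit hRtri hRnn hdec hTh
end

section
/- Let D be a GCD domain and let A ∈ D^{n×n}. Fix k with 1 ≤ k ≤ n. Then a greatest common divisor of all k×k minors of the n×2n block matrix (AᵗA | Aᵗ) is an associate of (equal up to a unit of D to) the k-th determinantal divisor d_k* of A, i.e. a greatest common divisor of all k×k minors of A. -/
/-!
Since `(AᵀA | Aᵀ) = Aᵀ (A | 1)`, the Cauchy–Binet expansion writes every `k × k` minor of the
block matrix as a combination of `k × k` minors of `Aᵀ`, which are the transposed minors of `A`;
hence `d ∣ e`. Conversely these minors of `Aᵀ` are themselves minors of the block matrix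
(columns taken from the right block), so `e ∣ d`.
-/

open Matrix

namespace Matrix

variable {R : Type*} [CommRing R]

section CauchyBinet

variable {ι m : Type*} [Fintype ι] [DecidableEq ι] [Fintype m]

theorem det_mul_eq_sum_prod_mul_det_submatrix_rows (M : Matrix ι m R) (N : Matrix m ι R) :
    (M * N).det = ∑ p : ι → m, (∏ i, M i (p i)) * (N.submatrix p id).det := by
  have hrows : (M * N).det = detRowAlternating fun i => ∑ l, M i l • N l := by
    congr 1 with i j
    simp [mul_apply]
  rw [hrows, ← AlternatingMap.coe_multilinearMap, MultilinearMap.map_sum]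
  refine Finset.sum_congr rfl fun p _ => ?_
  rw [MultilinearMap.map_smul_univ]
  rfl

theorem det_mul_eq_sum_prod_mul_det_submatrix_cols (M : Matrix ι m R) (N : Matrix m ι R) :
    (M * N).det = ∑ p : ι → m, (∏ j, N (p j) j) * (M.submatrix id p).det := by
  rw [← det_transpose, transpose_mul, det_mul_eq_sum_prod_mul_det_submatrix_rows]
  simp_rw [← transpose_submatrix, det_transpose]
  rfl

theorem dvd_det_mul_of_dvd_det_submatrix {c : R} (M : Matrix ι m R) (N : Matrix m ι R)
    (hM : ∀ p : ι → m, Function.Injective p → c ∣ (M.submatrix id p).det) :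
    c ∣ (M * N).det := by
  rw [det_mul_eq_sum_prod_mul_det_submatrix_cols]
  refine Finset.dvd_sum fun p _ => Dvd.dvd.mul_left ?_ _
  by_cases hp : Function.Injective p
  · exact hM p hp
  · obtain ⟨i, j, hpij, hij⟩ := Function.not_injective_iff.mp hp
    rw [det_zero_of_column_eq hij fun l => by simp [hpij]]
    exact dvd_zero c

end CauchyBinet

theorem dvd_det_submatrix_mul {l m o : Type*} [Fintype m] {k : ℕ} {c : R}
    (M : Matrix l m R) (N : Matrix m o R)
    (hM : ∀ (I : Fin k → l) (J : Fin k → m), Function.Injective I → Function.Injective J →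
      c ∣ (M.submatrix I J).det)
    (I : Fin k → l) (J : Fin k → o) (hI : Function.Injective I) :
    c ∣ ((M * N).submatrix I J).det := by
  rw [submatrix_mul M N I id J Function.bijective_id]
  exact dvd_det_mul_of_dvd_det_submatrix _ _ fun p hp => hM I p hI hp

theorem det_transpose_submatrix {l m : Type*} [Fintype l] [DecidableEq l] (A : Matrix m m R)
    (I J : l → m) : (Aᵀ.submatrix I J).det = (A.submatrix J I).det := by
  rw [← transpose_submatrix, det_transpose]

end Matrix

theorem stmt14_general {D : Type*} [CommRing D] [IsDomain D] [GCDMonoid D] {n : ℕ}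
    (A : Matrix (Fin n) (Fin n) D) (k : ℕ) (d e : D)
    (hd1 : ∀ I J : Fin k → Fin n, Function.Injective I → Function.Injective J →
      d ∣ (A.submatrix I J).det)
    (hd2 : ∀ c : D, (∀ I J : Fin k → Fin n, Function.Injective I →
      Function.Injective J → c ∣ (A.submatrix I J).det) → c ∣ d)
    (he1 : ∀ (I : Fin k → Fin n) (J : Fin k → Fin n ⊕ Fin n), Function.Injective I →
      Function.Injective J → e ∣ ((Matrix.fromCols (Aᵀ * A) Aᵀ).submatrix I J).det)
    (he2 : ∀ c : D, (∀ (I : Fin k → Fin n) (J : Fin k → Fin n ⊕ Fin n),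
      Function.Injective I → Function.Injective J →
      c ∣ ((Matrix.fromCols (Aᵀ * A) Aᵀ).submatrix I J).det) → c ∣ e) :
    Associated d e := by
  have hfactor : fromCols (Aᵀ * A) Aᵀ = Aᵀ * fromCols A 1 := by
    rw [mul_fromCols, Matrix.mul_one]
  have hd_transpose : ∀ I J : Fin k → Fin n, Function.Injective I → Function.Injective J →
      d ∣ (Aᵀ.submatrix I J).det := fun I J hI hJ => by
    rw [det_transpose_submatrix]
    exact hd1 J I hJ hI
  refine associated_of_dvd_dvd (he2 d fun I J hI _ => ?_) (hd2 e fun I J hI hJ => ?_)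
  · rw [hfactor]
    exact dvd_det_submatrix_mul _ _ hd_transpose I J hI
  · have hright : e ∣ (Aᵀ.submatrix J I).det :=
      he1 J (Sum.inr ∘ I) hJ (Sum.inr_injective.comp hI)
    rwa [det_transpose_submatrix] at hright

/-- Let `D` be a GCD domain and `A ∈ D^{n×n}`.  A gcd `e` of all
`k × k` minors of the `n × 2n` block matrix `(Aᵀ·A | Aᵀ)` is an associate of the
`k`-th determinantal divisor `d` of `A`, i.e. of a gcd of all `k × k` minors of `A`.
(Index sets of size `k` are encoded by injective maps from `Fin k`.) -/
theorem stmt14 {D : Type*} [CommRing D] [IsDomain D] [GCDMonoid D] {n : ℕ}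
    (A : Matrix (Fin n) (Fin n) D) (k : ℕ) (hk1 : 1 ≤ k) (hkn : k ≤ n) (d e : D)
    (hd1 : ∀ I J : Fin k → Fin n, Function.Injective I → Function.Injective J →
      d ∣ (A.submatrix I J).det)
    (hd2 : ∀ c : D, (∀ I J : Fin k → Fin n, Function.Injective I →
      Function.Injective J → c ∣ (A.submatrix I J).det) → c ∣ d)
    (he1 : ∀ (I : Fin k → Fin n) (J : Fin k → Fin n ⊕ Fin n), Function.Injective I →
      Function.Injective J → e ∣ ((Matrix.fromCols (Aᵀ * A) Aᵀ).submatrix I J).det)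
    (he2 : ∀ c : D, (∀ (I : Fin k → Fin n) (J : Fin k → Fin n ⊕ Fin n),
      Function.Injective I → Function.Injective J →
      c ∣ ((Matrix.fromCols (Aᵀ * A) Aᵀ).submatrix I J).det) → c ∣ e) :
    Associated d e :=
  stmt14_general A k d e hd1 hd2 he1 he2
end

section
/- Let K be a field and let A ∈ K^{n×n} be invertible. Suppose A = Θ · D^{−1} · R with D diagonal invertible, R upper triangular invertible, and ΘᵗΘ = D; and suppose also A = Θ̃ · D̃^{−1} · R̃ where D̃ ∈ K^{n×n} is diagonal invertible, R̃ ∈ K^{n×n} is upper triangular invertible, and Θ̃ᵗΘ̃ is a diagonal matrix. Then ΘᵗΘ̃ is a diagonal matrix, it is invertible, and R̃ = (ΘᵗΘ̃)^{−1} · D̃ · R. -/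
/-!
Write `P = D⁻¹R` and `P' = D̃⁻¹R̃`, both upper triangular, so that `ΘP = Θ̃P'`. Multiplying by `Θᵀ`
gives `(ΘᵀΘ̃)P' = (ΘᵀΘ)P`, so `ΘᵀΘ̃` is upper triangular; multiplying by `Θ̃ᵀ` gives
`(Θ̃ᵀΘ)P = (Θ̃ᵀΘ̃)P'`, so its transpose is upper triangular as well. Hence `M = ΘᵀΘ̃` is diagonal,
and `ΘᵀΘ = D` turns the first identity into `M D̃⁻¹ R̃ = R`, from which invertibility of `M` and
`R̃ = D̃ M⁻¹ R = M⁻¹ D̃ R` follow because diagonal matrices commute.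
-/

open Matrix

namespace Matrix

variable {m α : Type*}

theorem IsDiag.blockTriangular [Zero α] {β : Type*} [Preorder β] {A : Matrix m m α}
    (h : A.IsDiag) (b : m → β) : A.BlockTriangular b :=
  fun _ _ hij => h fun hji => hij.ne (congrArg b hji.symm)

theorem isDiag_of_isUpperTriangular_of_transpose [Zero α] [LinearOrder m] {A : Matrix m m α}
    (h : A.IsUpperTriangular) (hT : Aᵀ.IsUpperTriangular) : A.IsDiag := by
  intro i j hij
  rcases hij.lt_or_gt with hlt | hgt
  · exact hT hlt
  · exact h hgt

variable [Fintype m] [DecidableEq m] [CommRing α]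

theorem IsDiag.inv {A : Matrix m m α} (h : A.IsDiag) : A⁻¹.IsDiag := by
  rw [← h.diagonal_diag, inv_diagonal]
  exact isDiag_diagonal _

theorem IsDiag.commute {A B : Matrix m m α} (hA : A.IsDiag) (hB : B.IsDiag) : Commute A B := by
  rw [← hA.diagonal_diag, ← hB.diagonal_diag, Commute, SemiconjBy, diagonal_mul_diagonal,
    diagonal_mul_diagonal]
  simp only [mul_comm]

variable {β : Type*} [LinearOrder β] {b : m → β}

theorem BlockTriangular.inv {A : Matrix m m α} (h : A.BlockTriangular b) :
    A⁻¹.BlockTriangular b := by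
  by_cases hA : IsUnit A.det
  · have := A.invertibleOfIsUnitDet hA
    exact blockTriangular_inv_of_blockTriangular h
  · rw [nonsing_inv_apply_not_isUnit A hA]
    exact blockTriangular_zero

theorem BlockTriangular.of_mul_eq {X Y Z : Matrix m m α} (hY : Y.BlockTriangular b)
    (hYu : IsUnit Y.det) (hZ : Z.BlockTriangular b) (h : X * Y = Z) : X.BlockTriangular b := by
  rw [← mul_nonsing_inv_cancel_right Y X hYu, h]
  exact hZ.mul hY.inv

/-- `ΘᵀΘ' = (ΘᵀΘ) P P'⁻¹`. -/
theorem BlockTriangular.transpose_mul_of_mul_eq_mul {Θ Θ' P P' : Matrix m m α}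
    (hΘ : (Θᵀ * Θ).BlockTriangular b) (hP : P.BlockTriangular b) (hP' : P'.BlockTriangular b)
    (hP'u : IsUnit P'.det) (h : Θ * P = Θ' * P') : (Θᵀ * Θ').BlockTriangular b :=
  hP'.of_mul_eq hP'u (hΘ.mul hP) (by rw [Matrix.mul_assoc, ← h, Matrix.mul_assoc])

theorem isDiag_transpose_mul_of_mul_eq_mul [LinearOrder m] {Θ Θ' P P' : Matrix m m α}
    (hΘ : (Θᵀ * Θ).IsDiag) (hΘ' : (Θ'ᵀ * Θ').IsDiag) (hP : P.IsUpperTriangular)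
    (hP' : P'.IsUpperTriangular) (hPu : IsUnit P.det) (hP'u : IsUnit P'.det)
    (h : Θ * P = Θ' * P') : (Θᵀ * Θ').IsDiag := by
  refine isDiag_of_isUpperTriangular_of_transpose
    ((hΘ.blockTriangular id).transpose_mul_of_mul_eq_mul hP hP' hP'u h) ?_
  rw [transpose_mul, transpose_transpose]
  exact (hΘ'.blockTriangular id).transpose_mul_of_mul_eq_mul hP' hP hPu h.symm

end Matrix

theorem stmt17_general {K : Type*} [Field K] {n : ℕ}
    (A Θ R Dm Θ' R' Dm' : Matrix (Fin n) (Fin n) K)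
    (hDdiag : ∀ i j : Fin n, i ≠ j → Dm i j = 0) (hDunit : IsUnit Dm.det)
    (hRtri : ∀ i j : Fin n, j < i → R i j = 0) (hRunit : IsUnit R.det)
    (hdec : A = Θ * Dm⁻¹ * R) (hTh : Θᵀ * Θ = Dm)
    (hDdiag' : ∀ i j : Fin n, i ≠ j → Dm' i j = 0) (hDunit' : IsUnit Dm'.det)
    (hRtri' : ∀ i j : Fin n, j < i → R' i j = 0) (hRunit' : IsUnit R'.det)
    (hdec' : A = Θ' * Dm'⁻¹ * R')
    (hTh' : ∀ i j : Fin n, i ≠ j → (Θ'ᵀ * Θ') i j = 0) :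
    (∀ i j : Fin n, i ≠ j → (Θᵀ * Θ') i j = 0) ∧
    IsUnit (Θᵀ * Θ').det ∧
    R' = (Θᵀ * Θ')⁻¹ * Dm' * R := by
  have hD : Dm.IsDiag := hDdiag
  have hD' : Dm'.IsDiag := hDdiag'
  have hP : (Dm⁻¹ * R).IsUpperTriangular := (hD.inv.blockTriangular id).mul hRtri
  have hP' : (Dm'⁻¹ * R').IsUpperTriangular := (hD'.inv.blockTriangular id).mul hRtri'
  have hPu : IsUnit (Dm⁻¹ * R).det := by
    rw [det_mul]; exact (isUnit_nonsing_inv_det _ hDunit).mul hRunit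
  have hP'u : IsUnit (Dm'⁻¹ * R').det := by
    rw [det_mul]; exact (isUnit_nonsing_inv_det _ hDunit').mul hRunit'
  have hdec_eq : Θ * (Dm⁻¹ * R) = Θ' * (Dm'⁻¹ * R') := by
    rw [← Matrix.mul_assoc, ← Matrix.mul_assoc, ← hdec, ← hdec']
  set M := Θᵀ * Θ'
  have hM : M.IsDiag := isDiag_transpose_mul_of_mul_eq_mul (hTh ▸ hD) hTh' hP hP' hPu hP'u hdec_eq
  have hMR : M * (Dm'⁻¹ * R') = R := by
    rw [Matrix.mul_assoc, ← hdec_eq, ← Matrix.mul_assoc, ← Matrix.mul_assoc, hTh,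
      mul_nonsing_inv _ hDunit, Matrix.one_mul]
  have hMu : IsUnit M.det := isUnit_of_mul_isUnit_left (by rwa [← det_mul, hMR])
  refine ⟨hM, hMu, ?_⟩
  rw [← (hD'.commute hM.inv).eq, ← hMR, Matrix.mul_assoc, nonsing_inv_mul_cancel_left _ _ hMu,
    mul_nonsing_inv_cancel_left _ _ hDunit']

/-- (Theorem 16 of the paper: uniqueness of the fraction-free QR
decomposition.)  Let `A` be invertible over a field `K` with `A = Θ·D⁻¹·R`,
`ΘᵀΘ = D` (`D` diagonal invertible, `R` upper triangular invertible), and let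
`A = Θ̃·D̃⁻¹·R̃` be another decomposition with `D̃` diagonal invertible, `R̃` upper
triangular invertible and `Θ̃ᵀΘ̃` diagonal.  Then `ΘᵀΘ̃` is diagonal and invertible,
and `R̃ = (ΘᵀΘ̃)⁻¹·D̃·R`. -/
theorem stmt17 {K : Type*} [Field K] {n : ℕ}
    (A Θ R Dm Θ' R' Dm' : Matrix (Fin n) (Fin n) K)
    (hA : IsUnit A.det)
    (hDdiag : ∀ i j : Fin n, i ≠ j → Dm i j = 0) (hDunit : IsUnit Dm.det)
    (hRtri : ∀ i j : Fin n, j < i → R i j = 0) (hRunit : IsUnit R.det)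
    (hdec : A = Θ * Dm⁻¹ * R) (hTh : Θᵀ * Θ = Dm)
    (hDdiag' : ∀ i j : Fin n, i ≠ j → Dm' i j = 0) (hDunit' : IsUnit Dm'.det)
    (hRtri' : ∀ i j : Fin n, j < i → R' i j = 0) (hRunit' : IsUnit R'.det)
    (hdec' : A = Θ' * Dm'⁻¹ * R')
    (hTh' : ∀ i j : Fin n, i ≠ j → (Θ'ᵀ * Θ') i j = 0) :
    (∀ i j : Fin n, i ≠ j → (Θᵀ * Θ') i j = 0) ∧
    IsUnit (Θᵀ * Θ').det ∧
    R' = (Θᵀ * Θ')⁻¹ * Dm' * R :=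
  stmt17_general A Θ R Dm Θ' R' Dm' hDdiag hDunit hRtri hRunit hdec hTh hDdiag' hDunit' hRtri'
    hRunit' hdec' hTh'
end

section
/- For every real number q with 0 < q < 1 and every natural number k ≥ 0, the series Σ_{j=1}^∞ q^j · ∏_{i=0}^{k−1} (1 − q^{j+i}) converges and its sum equals q/(1 − q^{k+1}). Equivalently, for every real (or integer) p > 1, Σ_{j=1}^∞ p^{−j} · ∏_{i=0}^{k−1} (1 − p^{−j−i}) = p^k/(p^{k+1} − 1). -/
/-- For `0 < q < 1` and `k ∈ ℕ`, the series
`∑_{j ≥ 1} q^j · ∏_{i=0}^{k−1} (1 − q^{j+i})` converges with sum `q/(1 − q^{k+1})`.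
(The summation variable `j : ℕ` below encodes `j + 1 ≥ 1`.) -/
theorem stmt18 (q : ℝ) (hq0 : 0 < q) (hq1 : q < 1) (k : ℕ) :
    HasSum (fun j : ℕ => q ^ (j + 1) * ∏ i ∈ Finset.range k, (1 - q ^ (j + 1 + i)))
      (q / (1 - q ^ (k + 1))) := by
  have hqnn : 0 ≤ q := hq0.le
  -- factors are in (0,1] for exponents ≥ 1
  have hfac : ∀ m : ℕ, 1 ≤ m → 0 < 1 - q ^ m := by
    intro m hm
    have : q ^ m < 1 := by
      calc q ^ m ≤ q ^ 1 := pow_le_pow_of_le_one hqnn hq1.le hm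
        _ = q := pow_one q
        _ < 1 := hq1
    linarith
  have hk1 : (0:ℝ) < 1 - q ^ (k + 1) := hfac (k+1) (Nat.le_add_left 1 k)
  set c : ℕ → ℝ := fun n => ∏ i ∈ Finset.range (k+1), (1 - q ^ (n + i)) with hc
  have hc0 : c 0 = 0 := by
    apply Finset.prod_eq_zero (Finset.mem_range.2 (Nat.succ_pos k))
    simp
  have hdiff : ∀ j : ℕ,
      c (j+1) - c j = q ^ j * (1 - q ^ (k+1)) * ∏ i ∈ Finset.range k, (1 - q ^ (j + 1 + i)) := by
    intro j
    have h1 : c (j+1) = (∏ i ∈ Finset.range k, (1 - q ^ (j + 1 + i))) * (1 - q ^ (j + 1 + k)) := by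
      rw [hc]; exact Finset.prod_range_succ _ _
    have h2 : c j = (∏ i ∈ Finset.range k, (1 - q ^ (j + (i + 1)))) * (1 - q ^ (j + 0)) := by
      rw [hc]; exact Finset.prod_range_succ' _ _
    have h2' : c j = (∏ i ∈ Finset.range k, (1 - q ^ (j + 1 + i))) * (1 - q ^ j) := by
      rw [h2, add_zero]
      congr 1
      exact Finset.prod_congr rfl fun i _ => by rw [show j + (i + 1) = j + 1 + i from by omega]
    have hp : q ^ (j + 1 + k) = q ^ j * q ^ (k + 1) := by
      rw [← pow_add]; congr 1; omega
    rw [h1, h2', hp]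
    try ring
  -- c n tends to 1
  have hctend : Filter.Tendsto c Filter.atTop (nhds 1) := by
    have : Filter.Tendsto c Filter.atTop (nhds (∏ i ∈ Finset.range (k+1), (1:ℝ))) := by
      apply tendsto_finset_prod
      intro i _
      have h1 : Filter.Tendsto (fun n : ℕ => q ^ (n + i)) Filter.atTop (nhds 0) := by
        simp only [pow_add]
        have := (tendsto_pow_atTop_nhds_zero_of_lt_one hqnn hq1).mul_const (q ^ i)
        simpa using this
      have := ((tendsto_const_nhds : Filter.Tendsto (fun _ : ℕ => (1:ℝ)) Filter.atTop (nhds 1)).sub h1)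
      simpa using this
    simpa using this
  -- telescoping hasSum
  have htel : HasSum (fun j => c (j+1) - c j) 1 := by
    have hnn : ∀ j : ℕ, 0 ≤ c (j+1) - c j := by
      intro j
      rw [hdiff j]
      apply mul_nonneg (mul_nonneg (pow_nonneg hqnn j) hk1.le)
      apply Finset.prod_nonneg
      intro i _
      exact (hfac (j+1+i) (by omega)).le
    rw [hasSum_iff_tendsto_nat_of_nonneg hnn]
    have hsum : ∀ n, ∑ j ∈ Finset.range n, (c (j+1) - c j) = c n := by
      intro n
      rw [Finset.sum_range_sub, hc0, sub_zero]
    simp only [hsum]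
    exact hctend
  have := htel.mul_left (q / (1 - q ^ (k+1)))
  have heq : (fun j => q / (1 - q ^ (k+1)) * (c (j+1) - c j)) =
      (fun j : ℕ => q ^ (j + 1) * ∏ i ∈ Finset.range k, (1 - q ^ (j + 1 + i))) := by
    funext j
    rw [hdiff j]
    field_simp
    ring
  rw [heq] at this
  simpa using this
end

section
/- Let p > 1 be a real number and k ≥ 0 a natural number. For integers j ≥ 1 define P_{p,j,k} := 1 − (1 + p^{1−j−k}·(p^k − 1)/(p − 1)) · ∏_{i=0}^{k−1} (1 − p^{−j−i}), and for 1 ≤ i ≤ k define the Gaussian binomial coefficient at 1/p by [k choose i]_{1/p} := ∏_{m=1}^{i} (1 − p^{−(k−m+1)})/(1 − p^{−m}). Then the series Σ_{j=1}^∞ P_{p,j,k} converges and Σ_{j=1}^∞ P_{p,j,k} = Σ_{i=1}^{k} ((−1)^{i−1}/(p^{i(i−1)/2}·(p^i − 1))) · [k choose i]_{1/p} + 1/(p^{k+1} − 1) − 1/(p − 1). -/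
/-!
Put `q = p⁻¹`. The q-binomial theorem
`∏_{i<k} (1 - x q^i) = ∑_a (-1)^a q^(a choose 2) [k choose a]_q x^a`, taken at `x = q^(j+1)`, turns
the `j`-th term of the series into a finite combination of geometric sequences in `j`, and
`∑_{j ≥ 1} q^(a j) = q^a / (1 - q^a) = 1 / (p^a - 1)`. The part `1 - ∏` gives the alternating sum.
The part `q^(j+1) ∏` sums to `q / (1 - q^(k+1))`: by `[k+1 choose a+1]_q (1 - q^(a+1)) =
[k choose a]_q (1 - q^(k+1))` this is the q-binomial theorem for `k + 1` at `x = 1`, where the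
product vanishes. Multiplied by `-(1 - q^k)/(1 - q)` it becomes `1/(p^(k+1) - 1) - 1/(p - 1)`.
-/

open Finset

lemma Nat.succ_choose_two (a : ℕ) : (a + 1).choose 2 = a.choose 2 + a := by
  rw [Nat.choose_succ_succ', Nat.choose_one_right, add_comm]

lemma sum_Icc_one_eq_sum_range {M : Type*} [AddCommMonoid M] (f : ℕ → M) (n : ℕ) :
    ∑ i ∈ Icc 1 n, f i = ∑ a ∈ range n, f (a + 1) := by
  rw [range_eq_Ico, sum_Ico_add']
  rfl

section QBinomial

variable {K : Type*} [Field K] {q : K}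

def qBinom (q : K) (k a : ℕ) : K :=
  ∏ m ∈ Icc 1 a, (1 - q ^ (k + 1 - m)) / (1 - q ^ m)

@[simp]
lemma qBinom_zero (q : K) (k : ℕ) : qBinom q k 0 = 1 := by
  simp [qBinom]

lemma qBinom_succ (q : K) (k a : ℕ) :
    qBinom q k (a + 1) = qBinom q k a * ((1 - q ^ (k - a)) / (1 - q ^ (a + 1))) := by
  rw [qBinom, qBinom, prod_Icc_succ_top (by omega), Nat.succ_sub_succ]

lemma qBinom_eq_zero_of_lt (q : K) {k a : ℕ} (h : k < a) : qBinom q k a = 0 :=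
  prod_eq_zero (i := k + 1) (mem_Icc.2 ⟨by omega, h⟩) (by simp)

lemma qBinom_succ_mul (hq : ∀ n, 0 < n → q ^ n ≠ 1) (k a : ℕ) :
    qBinom q k (a + 1) * (1 - q ^ (a + 1)) = qBinom q k a * (1 - q ^ (k - a)) := by
  rw [qBinom_succ, mul_assoc, div_mul_cancel₀ _ (sub_ne_zero.2 (hq _ a.succ_pos).symm)]

lemma qBinom_succ_succ_mul (hq : ∀ n, 0 < n → q ^ n ≠ 1) (k a : ℕ) :
    qBinom q (k + 1) (a + 1) * (1 - q ^ (a + 1)) = qBinom q k a * (1 - q ^ (k + 1)) := by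
  induction a with
  | zero => simpa using qBinom_succ_mul hq (k + 1) 0
  | succ a ih =>
    refine mul_right_cancel₀ (sub_ne_zero.2 (hq (a + 1) a.succ_pos).symm) ?_
    have h1 := qBinom_succ_mul hq (k + 1) (a + 1)
    have h2 := qBinom_succ_mul hq k a
    rw [Nat.add_sub_add_right] at h1
    linear_combination (1 - q ^ (a + 1)) * h1 + (1 - q ^ (k - a)) * ih - (1 - q ^ (k + 1)) * h2

lemma qBinom_succ_succ (hq : ∀ n, 0 < n → q ^ n ≠ 1) (k a : ℕ) :
    qBinom q (k + 1) (a + 1) = qBinom q k (a + 1) + q ^ (k - a) * qBinom q k a := by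
  refine mul_right_cancel₀ (sub_ne_zero.2 (hq (a + 1) a.succ_pos).symm) ?_
  rw [add_mul, qBinom_succ_succ_mul hq, qBinom_succ_mul hq]
  rcases le_or_gt a k with h | h
  · have hpow : q ^ (k - a) * q ^ (a + 1) = q ^ (k + 1) := by rw [← pow_add]; congr 1; omega
    linear_combination qBinom q k a * hpow
  · simp [qBinom_eq_zero_of_lt q h]

lemma neg_one_pow_mul_qBinom_succ_succ (hq : ∀ n, 0 < n → q ^ n ≠ 1) {k a : ℕ} (ha : a ≤ k) :
    (-1) ^ (a + 1) * q ^ (a + 1).choose 2 * qBinom q (k + 1) (a + 1) =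
      (-1) ^ (a + 1) * q ^ (a + 1).choose 2 * qBinom q k (a + 1) -
        q ^ k * ((-1) ^ a * q ^ a.choose 2 * qBinom q k a) := by
  have hpow : q ^ (a + 1).choose 2 * q ^ (k - a) = q ^ k * q ^ a.choose 2 := by
    rw [← pow_add, ← pow_add, Nat.succ_choose_two]
    congr 1
    omega
  rw [qBinom_succ_succ hq]
  linear_combination (-1) ^ (a + 1) * qBinom q k a * hpow

theorem prod_one_sub_mul_pow_eq_sum (hq : ∀ n, 0 < n → q ^ n ≠ 1) (k : ℕ) (x : K) :
    ∏ i ∈ range k, (1 - x * q ^ i) =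
      ∑ a ∈ range (k + 1), (-1) ^ a * q ^ a.choose 2 * qBinom q k a * x ^ a := by
  induction k with
  | zero => simp
  | succ k ih =>
    have hshift :=
      sum_range_succ' (fun a => (-1) ^ a * q ^ a.choose 2 * qBinom q k a * x ^ a) (k + 1)
    rw [sum_range_succ, qBinom_eq_zero_of_lt q k.lt_succ_self] at hshift
    simp only [mul_zero, zero_mul, add_zero, qBinom_zero, pow_zero, Nat.choose_zero_succ] at hshift
    have hpascal : ∑ a ∈ range (k + 1),
        (-1) ^ (a + 1) * q ^ (a + 1).choose 2 * qBinom q (k + 1) (a + 1) * x ^ (a + 1) =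
          ∑ a ∈ range (k + 1),
            (-1) ^ (a + 1) * q ^ (a + 1).choose 2 * qBinom q k (a + 1) * x ^ (a + 1) -
          x * q ^ k * ∑ a ∈ range (k + 1), (-1) ^ a * q ^ a.choose 2 * qBinom q k a * x ^ a := by
      rw [mul_sum, ← sum_sub_distrib]
      refine sum_congr rfl fun a ha => ?_
      rw [neg_one_pow_mul_qBinom_succ_succ hq (Nat.lt_succ_iff.1 (mem_range.1 ha))]
      ring
    rw [prod_range_succ, ih, sum_range_succ' _ (k + 1), hpascal, hshift]
    simp only [mul_one, pow_zero, Nat.choose_zero_succ, qBinom_zero]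
    ring

theorem sum_qBinom_mul_pow_div (hq : ∀ n, 0 < n → q ^ n ≠ 1) (k : ℕ) :
    ∑ a ∈ range (k + 1),
        (-1) ^ a * q ^ a.choose 2 * qBinom q k a * (q ^ (a + 1) / (1 - q ^ (a + 1))) =
      q / (1 - q ^ (k + 1)) := by
  have hvanish := prod_one_sub_mul_pow_eq_sum hq (k + 1) 1
  rw [prod_eq_zero (mem_range.2 k.succ_pos) (by simp), sum_range_succ'] at hvanish
  simp only [one_pow, mul_one, pow_zero, Nat.choose_zero_succ, qBinom_zero] at hvanish
  have hterm : ∀ a,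
      (-1) ^ a * q ^ a.choose 2 * qBinom q k a * (q ^ (a + 1) / (1 - q ^ (a + 1))) *
        (1 - q ^ (k + 1)) =
      -q * ((-1) ^ (a + 1) * q ^ (a + 1).choose 2 * qBinom q (k + 1) (a + 1)) := by
    intro a
    rw [Nat.succ_choose_two]
    field_simp [sub_ne_zero.2 (hq _ a.succ_pos).symm]
    linear_combination -(-1) ^ a * q ^ a.choose 2 * q ^ (a + 1) * qBinom_succ_succ_mul hq k a
  rw [eq_div_iff (sub_ne_zero.2 (hq _ k.succ_pos).symm), sum_mul, sum_congr rfl fun a _ => hterm a,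
    ← mul_sum]
  linear_combination q * hvanish

end QBinomial

section Series

variable {q : ℝ}

lemma pow_ne_one_of_lt_one (hq0 : 0 ≤ q) (hq1 : q < 1) {n : ℕ} (hn : 0 < n) : q ^ n ≠ 1 :=
  (pow_lt_one₀ hq0 hq1 hn.ne').ne

lemma hasSum_sum_mul_pow_pow_succ (hq0 : 0 ≤ q) (hq1 : q < 1) (s : Finset ℕ) (c : ℕ → ℝ) :
    HasSum (fun j : ℕ => ∑ a ∈ s, c a * (q ^ (j + 1)) ^ (a + 1))
      (∑ a ∈ s, c a * (q ^ (a + 1) / (1 - q ^ (a + 1)))) := by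
  refine hasSum_sum fun a _ => ?_
  have hgeom :=
    hasSum_geometric_of_lt_one (pow_nonneg hq0 (a + 1)) (pow_lt_one₀ hq0 hq1 a.succ_ne_zero)
  have hterm : (fun j : ℕ => c a * (q ^ (j + 1)) ^ (a + 1)) =
      fun j => c a * (q ^ (a + 1) * (q ^ (a + 1)) ^ j) :=
    funext fun j => by rw [pow_right_comm, pow_succ']
  rw [hterm, div_eq_mul_inv]
  exact (hgeom.mul_left _).mul_left _

lemma hasSum_one_sub_prod_one_sub (hq0 : 0 ≤ q) (hq1 : q < 1) (k : ℕ) :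
    HasSum (fun j : ℕ => 1 - ∏ i ∈ range k, (1 - q ^ (j + 1) * q ^ i))
      (∑ i ∈ Icc 1 k, (-1) ^ (i - 1) * q ^ i.choose 2 * qBinom q k i * (q ^ i / (1 - q ^ i))) := by
  rw [sum_Icc_one_eq_sum_range]
  convert hasSum_sum_mul_pow_pow_succ hq0 hq1 (range k)
    (fun a => (-1) ^ a * q ^ (a + 1).choose 2 * qBinom q k (a + 1)) using 2 with j
  · rw [prod_one_sub_mul_pow_eq_sum (fun n hn => pow_ne_one_of_lt_one hq0 hq1 hn), sum_range_succ']
    simp [pow_succ]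
  · simp

lemma hasSum_pow_mul_prod_one_sub (hq0 : 0 ≤ q) (hq1 : q < 1) (k : ℕ) :
    HasSum (fun j : ℕ => q ^ (j + 1) * ∏ i ∈ range k, (1 - q ^ (j + 1) * q ^ i))
      (q / (1 - q ^ (k + 1))) := by
  have hq : ∀ n, 0 < n → q ^ n ≠ 1 := fun n hn => pow_ne_one_of_lt_one hq0 hq1 hn
  rw [← sum_qBinom_mul_pow_div hq]
  convert hasSum_sum_mul_pow_pow_succ hq0 hq1 (range (k + 1))
    (fun a => (-1) ^ a * q ^ a.choose 2 * qBinom q k a) using 2 with j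
  rw [prod_one_sub_mul_pow_eq_sum hq, mul_sum]
  exact sum_congr rfl fun a _ => by ring

end Series

lemma prod_Icc_zpow_eq_qBinom {K : Type*} [Field K] (p : K) {k i : ℕ} (hi : i ≤ k + 1) :
    ∏ m ∈ Icc 1 i, (1 - p ^ (-((k : ℤ) - (m : ℤ) + 1))) / (1 - p ^ (-(m : ℤ))) =
      qBinom p⁻¹ k i := by
  refine prod_congr rfl fun m hm => ?_
  have hexp : -((k : ℤ) - (m : ℤ) + 1) = -((k + 1 - m : ℕ) : ℤ) := by
    rw [Nat.cast_sub ((mem_Icc.1 hm).2.trans hi)]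
    push_cast
    ring
  rw [hexp, ← inv_zpow', ← inv_zpow', zpow_natCast, zpow_natCast]

section Inverse

variable {p : ℝ}

/-- `P_{p,j,k}`. -/
noncomputable def minorsDvdProb (p : ℝ) (j : ℤ) (k : ℕ) : ℝ :=
  1 - (1 + p ^ (1 - j - k) * ((p ^ k - 1) / (p - 1))) * ∏ i ∈ range k, (1 - p ^ (-j - i))

lemma minorsDvdProb_succ_eq (hp : 1 < p) (j k : ℕ) :
    minorsDvdProb p (j + 1) k =
      (1 - ∏ i ∈ range k, (1 - p⁻¹ ^ (j + 1) * p⁻¹ ^ i)) -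
        (1 - p⁻¹ ^ k) / (1 - p⁻¹) *
          (p⁻¹ ^ (j + 1) * ∏ i ∈ range k, (1 - p⁻¹ ^ (j + 1) * p⁻¹ ^ i)) := by
  have hprod : ∏ i ∈ range k, (1 - p ^ (-((j : ℤ) + 1) - i)) =
      ∏ i ∈ range k, (1 - p⁻¹ ^ (j + 1) * p⁻¹ ^ i) := by
    refine prod_congr rfl fun i _ => ?_
    rw [show -((j : ℤ) + 1) - i = -((j + 1 + i : ℕ) : ℤ) by push_cast; ring, ← inv_zpow',
      zpow_natCast, pow_add]
  have hcoeff : p ^ (1 - ((j : ℤ) + 1) - k) * ((p ^ k - 1) / (p - 1)) =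
      (1 - p⁻¹ ^ k) / (1 - p⁻¹) * p⁻¹ ^ (j + 1) := by
    rw [show 1 - ((j : ℤ) + 1) - k = -((j + k : ℕ) : ℤ) by push_cast; ring, ← inv_zpow',
      zpow_natCast]
    have hp1 : p - 1 ≠ 0 := by linarith
    have hp0 : p ≠ 0 := by positivity
    simp only [inv_pow]
    field_simp
    ring
  rw [minorsDvdProb, hprod, hcoeff]
  ring

lemma sum_zpow_add_sub_eq_inv_pow (hp : 1 < p) (k : ℕ) :
    (∑ i ∈ Icc 1 k, ((-1 : ℝ) ^ (i - 1) / (p ^ (i * (i - 1) / 2) * (p ^ i - 1))) *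
        ∏ m ∈ Icc 1 i, ((1 - p ^ (-((k : ℤ) - (m : ℤ) + 1))) / (1 - p ^ (-(m : ℤ))))) +
      1 / (p ^ (k + 1) - 1) - 1 / (p - 1) =
    (∑ i ∈ Icc 1 k,
        (-1) ^ (i - 1) * p⁻¹ ^ i.choose 2 * qBinom p⁻¹ k i * (p⁻¹ ^ i / (1 - p⁻¹ ^ i))) -
      (1 - p⁻¹ ^ k) / (1 - p⁻¹) * (p⁻¹ / (1 - p⁻¹ ^ (k + 1))) := by
  have hp0 : p ≠ 0 := by positivity
  have hp1 : p - 1 ≠ 0 := by linarith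
  have hpow : ∀ n, 0 < n → p ^ n - 1 ≠ 0 := fun n hn => sub_ne_zero.2 (one_lt_pow₀ hp hn.ne').ne'
  have hsum : ∀ i ∈ Icc 1 k,
      (-1 : ℝ) ^ (i - 1) / (p ^ (i * (i - 1) / 2) * (p ^ i - 1)) *
          ∏ m ∈ Icc 1 i, ((1 - p ^ (-((k : ℤ) - (m : ℤ) + 1))) / (1 - p ^ (-(m : ℤ)))) =
        (-1) ^ (i - 1) * p⁻¹ ^ i.choose 2 * qBinom p⁻¹ k i * (p⁻¹ ^ i / (1 - p⁻¹ ^ i)) := by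
    intro i hi
    have hi' := mem_Icc.1 hi
    have hpi := hpow i (by omega)
    rw [prod_Icc_zpow_eq_qBinom p (by omega), Nat.choose_two_right]
    simp only [inv_pow]
    field_simp
  have htail : 1 / (p ^ (k + 1) - 1) - 1 / (p - 1) =
      -((1 - p⁻¹ ^ k) / (1 - p⁻¹) * (p⁻¹ / (1 - p⁻¹ ^ (k + 1)))) := by
    have hpk := hpow (k + 1) k.succ_pos
    simp only [inv_pow]
    field_simp
    ring
  rw [sum_congr rfl hsum, add_sub_assoc, htail]
  ring

end Inverse

/-- For a real `p > 1` and `k ∈ ℕ`, with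
`P_{p,j,k} = 1 − (1 + p^{1−j−k}·(p^k − 1)/(p − 1)) · ∏_{i=0}^{k−1} (1 − p^{−j−i})`
and the Gaussian binomial `[k choose i]_{1/p} = ∏_{m=1}^{i} (1 − p^{−(k−m+1)})/(1 − p^{−m})`,
the series `∑_{j ≥ 1} P_{p,j,k}` converges with sum
`∑_{i=1}^{k} (−1)^{i−1}/(p^{i(i−1)/2}(p^i − 1)) · [k choose i]_{1/p} + 1/(p^{k+1} − 1) − 1/(p − 1)`.
(The summation variable `j : ℕ` below encodes `j + 1 ≥ 1`.) -/
theorem stmt19 (p : ℝ) (hp : 1 < p) (k : ℕ) :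
    HasSum
      (fun j : ℕ =>
        1 - (1 + p ^ (1 - ((j : ℤ) + 1) - (k : ℤ)) * ((p ^ k - 1) / (p - 1))) *
          ∏ i ∈ Finset.range k, (1 - p ^ (-((j : ℤ) + 1) - (i : ℤ))))
      ((∑ i ∈ Finset.Icc 1 k,
          ((-1 : ℝ) ^ (i - 1) / (p ^ (i * (i - 1) / 2) * (p ^ i - 1))) *
            ∏ m ∈ Finset.Icc 1 i,
              ((1 - p ^ (-((k : ℤ) - (m : ℤ) + 1))) / (1 - p ^ (-(m : ℤ))))) +
        1 / (p ^ (k + 1) - 1) - 1 / (p - 1)) := by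
  have hq0 : 0 ≤ p⁻¹ := by positivity
  have hq1 : p⁻¹ < 1 := inv_lt_one_of_one_lt₀ hp
  have hsum := (hasSum_one_sub_prod_one_sub hq0 hq1 k).sub
    ((hasSum_pow_mul_prod_one_sub hq0 hq1 k).mul_left ((1 - p⁻¹ ^ k) / (1 - p⁻¹)))
  rw [sum_zpow_add_sub_eq_inv_pow hp]
  simp_rw [← minorsDvdProb_succ_eq hp] at hsum
  exact hsum
end
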